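/- arXiv:1905.03862 — 2 statements merged into one kernel-verified Lean document; each statement's English description precedes it below -/
import Mathlib

section
/- Let R>0, c2>0, γ>0, k≥1, β∈(-1,0] and u(r) = (c2(1+γ)/k · (R/(β+1)·(R-r)^{β+1} - 1/(β+2)·(R-r)^{β+2}))^{1/(1+γ)}. Then there exists a constant C = C(k,γ,β,R,c2) such that |u(r₁)-u(r₂)| ≤ C·|r₁-r₂|^{(β+1)/(γ+1)} for all r₁,r₂ ∈ [0,R]. -/
/-!
In the variable `t = R - r` the radicand is `A · g t` with `A = c₂(1+γ)/k` and
`g t = R/(β+1) t^(β+1) - t^(β+2)/(β+2) = t^(β+1) (R/(β+1) - t/(β+2)) ≥ 0` on `[0, R]`.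
For `0 ≤ p ≤ 1`, subadditivity of `x ↦ x^p` makes it `p`-Hölder on `[0, ∞)` with constant `1`;
writing `t^(p+1) = t^p · t` then makes `t ↦ t^(p+1)` `p`-Hölder on `[0, R]` with constant `2R`.
So `g` is `(β+1)`-Hölder on `[0, R]`, and taking the `1/(1+γ)`-th power multiplies the exponents.
-/

open Set

namespace Real

theorem abs_rpow_sub_rpow_le {a b p : ℝ} (ha : 0 ≤ a) (hb : 0 ≤ b) (hp : 0 ≤ p) (hp1 : p ≤ 1) :
    |a ^ p - b ^ p| ≤ |a - b| ^ p := by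
  wlog hba : b ≤ a generalizing a b
  · rw [abs_sub_comm, abs_sub_comm a]
    exact this hb ha (le_of_not_ge hba)
  have h := rpow_add_le_add_rpow (sub_nonneg.2 hba) hb hp hp1
  rw [sub_add_cancel] at h
  rw [abs_of_nonneg (sub_nonneg.2 (rpow_le_rpow hb hba hp)), abs_of_nonneg (sub_nonneg.2 hba)]
  linarith

theorem le_rpow_one_sub_mul_rpow {x R p : ℝ} (hx : 0 ≤ x) (hxR : x ≤ R) (hp1 : p ≤ 1) :
    x ≤ R ^ (1 - p) * x ^ p := by
  rcases hx.eq_or_lt with rfl | hx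
  · exact mul_nonneg (rpow_nonneg hxR _) (rpow_nonneg le_rfl _)
  calc x = x ^ (1 - p) * x ^ p := by rw [← rpow_add hx, sub_add_cancel, rpow_one]
    _ ≤ R ^ (1 - p) * x ^ p := by gcongr

theorem abs_rpow_add_one_sub_rpow_add_one_le {t₁ t₂ R p : ℝ} (ht₁ : t₁ ∈ Icc 0 R)
    (ht₂ : t₂ ∈ Icc 0 R) (hp : 0 ≤ p) (hp1 : p ≤ 1) :
    |t₁ ^ (p + 1) - t₂ ^ (p + 1)| ≤ 2 * R * |t₁ - t₂| ^ p := by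
  have hR : 0 ≤ R := ht₁.1.trans ht₁.2
  have hd : |t₁ - t₂| ≤ R := by simpa using abs_sub_le_of_le_of_le ht₁.1 ht₁.2 ht₂.1 ht₂.2
  have hfirst : |t₁ ^ p * (t₁ - t₂)| ≤ R * |t₁ - t₂| ^ p :=
    calc |t₁ ^ p * (t₁ - t₂)| = t₁ ^ p * |t₁ - t₂| := by
          rw [abs_mul, abs_of_nonneg (rpow_nonneg ht₁.1 _)]
      _ ≤ R ^ p * (R ^ (1 - p) * |t₁ - t₂| ^ p) :=
          mul_le_mul (rpow_le_rpow ht₁.1 ht₁.2 hp)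
            (le_rpow_one_sub_mul_rpow (abs_nonneg _) hd hp1) (abs_nonneg _) (rpow_nonneg hR _)
      _ = R * |t₁ - t₂| ^ p := by
          rw [← mul_assoc, ← rpow_add' hR (by simp), add_sub_cancel, rpow_one]
  have hsecond : |(t₁ ^ p - t₂ ^ p) * t₂| ≤ R * |t₁ - t₂| ^ p := by
    rw [abs_mul, abs_of_nonneg ht₂.1, mul_comm]
    exact mul_le_mul ht₂.2 (abs_rpow_sub_rpow_le ht₁.1 ht₂.1 hp hp1) (abs_nonneg _) hR
  calc |t₁ ^ (p + 1) - t₂ ^ (p + 1)| = |t₁ ^ p * (t₁ - t₂) + (t₁ ^ p - t₂ ^ p) * t₂| := by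
        rw [rpow_add_one' ht₁.1 (by linarith), rpow_add_one' ht₂.1 (by linarith)]
        congr 1; ring
    _ ≤ |t₁ ^ p * (t₁ - t₂)| + |(t₁ ^ p - t₂ ^ p) * t₂| := abs_add_le _ _
    _ ≤ 2 * R * |t₁ - t₂| ^ p := by linarith

theorem abs_rpow_sub_rpow_le_of_abs_sub_le {a b d M α q : ℝ} (ha : 0 ≤ a) (hb : 0 ≤ b)
    (hd : 0 ≤ d) (hM : 0 ≤ M) (hq : 0 ≤ q) (hq1 : q ≤ 1) (h : |a - b| ≤ M * d ^ α) :
    |a ^ q - b ^ q| ≤ M ^ q * d ^ (α * q) :=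
  calc |a ^ q - b ^ q| ≤ |a - b| ^ q := abs_rpow_sub_rpow_le ha hb hq hq1
    _ ≤ (M * d ^ α) ^ q := by gcongr
    _ = M ^ q * d ^ (α * q) := by rw [mul_rpow hM (rpow_nonneg hd _), rpow_mul hd]

end Real

open Real

noncomputable def radialProfile (R β t : ℝ) : ℝ :=
  R / (β + 1) * t ^ (β + 1) - 1 / (β + 2) * t ^ (β + 2)

section radialProfile

variable {R β : ℝ}

theorem radialProfile_nonneg (hβ : -1 < β) {t : ℝ} (ht : t ∈ Icc 0 R) :
    0 ≤ radialProfile R β t := by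
  have hfactor : radialProfile R β t = t ^ (β + 1) * (R / (β + 1) - t / (β + 2)) := by
    rw [radialProfile, show β + 2 = (β + 1) + 1 by ring,
      rpow_add_one' (y := β + 1) ht.1 (by linarith)]
    ring
  have hcoeff : t / (β + 2) ≤ R / (β + 1) :=
    calc t / (β + 2) ≤ R / (β + 2) := by gcongr; exacts [by linarith, ht.2]
      _ ≤ R / (β + 1) := by gcongr; exacts [ht.1.trans ht.2, by linarith, by linarith]
  rw [hfactor]
  exact mul_nonneg (rpow_nonneg ht.1 _) (sub_nonneg.2 hcoeff)

theorem abs_radialProfile_sub_le (hβ1 : -1 < β) (hβ2 : β ≤ 0) {t₁ t₂ : ℝ}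
    (ht₁ : t₁ ∈ Icc 0 R) (ht₂ : t₂ ∈ Icc 0 R) :
    |radialProfile R β t₁ - radialProfile R β t₂|
      ≤ (R / (β + 1) + 2 * R / (β + 2)) * |t₁ - t₂| ^ (β + 1) := by
  have hR : 0 ≤ R := ht₁.1.trans ht₁.2
  have h₁ : |t₁ ^ (β + 1) - t₂ ^ (β + 1)| ≤ |t₁ - t₂| ^ (β + 1) :=
    abs_rpow_sub_rpow_le ht₁.1 ht₂.1 (by linarith) (by linarith)
  have h₂ : |t₁ ^ (β + 2) - t₂ ^ (β + 2)| ≤ 2 * R * |t₁ - t₂| ^ (β + 1) := by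
    rw [show β + 2 = (β + 1) + 1 by ring]
    exact abs_rpow_add_one_sub_rpow_add_one_le ht₁ ht₂ (by linarith) (by linarith)
  have hc₁ : 0 ≤ R / (β + 1) := div_nonneg hR (by linarith)
  have hc₂ : 0 < 1 / (β + 2) := one_div_pos.2 (by linarith)
  calc |radialProfile R β t₁ - radialProfile R β t₂|
      = |R / (β + 1) * (t₁ ^ (β + 1) - t₂ ^ (β + 1))
          - 1 / (β + 2) * (t₁ ^ (β + 2) - t₂ ^ (β + 2))| := by
        rw [radialProfile, radialProfile]; congr 1; ring
    _ ≤ R / (β + 1) * |t₁ ^ (β + 1) - t₂ ^ (β + 1)|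
          + 1 / (β + 2) * |t₁ ^ (β + 2) - t₂ ^ (β + 2)| := by
        refine (abs_sub _ _).trans_eq ?_
        rw [abs_mul, abs_mul, abs_of_nonneg hc₁, abs_of_pos hc₂]
    _ ≤ R / (β + 1) * |t₁ - t₂| ^ (β + 1) + 1 / (β + 2) * (2 * R * |t₁ - t₂| ^ (β + 1)) := by
        gcongr
    _ = (R / (β + 1) + 2 * R / (β + 2)) * |t₁ - t₂| ^ (β + 1) := by ring

end radialProfile

theorem stmt5_general (R c2 γ β : ℝ) (k : ℕ)
    (hc2 : 0 < c2) (hγ : 0 < γ)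
    (hβ1 : -1 < β) (hβ2 : β ≤ 0)
    (u : ℝ → ℝ)
    (hu : ∀ r, u r =
      (c2 * (1 + γ) / k *
        (R / (β + 1) * (R - r) ^ (β + 1) - 1 / (β + 2) * (R - r) ^ (β + 2))) ^ (1 / (1 + γ))) :
    ∃ C : ℝ, ∀ r₁ ∈ Set.Icc (0 : ℝ) R, ∀ r₂ ∈ Set.Icc (0 : ℝ) R,
      |u r₁ - u r₂| ≤ C * |r₁ - r₂| ^ ((β + 1) / (γ + 1)) := by
  set A := c2 * (1 + γ) / k
  set M := R / (β + 1) + 2 * R / (β + 2)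
  have hA : 0 ≤ A := by positivity
  have hq1 : 1 / (1 + γ) ≤ 1 := (div_le_one (by linarith)).2 (by linarith)
  refine ⟨(A * M) ^ (1 / (1 + γ)), fun r₁ hr₁ r₂ hr₂ => ?_⟩
  have ht₁ : R - r₁ ∈ Icc 0 R := ⟨by linarith [hr₁.2], by linarith [hr₁.1]⟩
  have ht₂ : R - r₂ ∈ Icc 0 R := ⟨by linarith [hr₂.2], by linarith [hr₂.1]⟩
  have hM : 0 ≤ M := by
    have hR : 0 ≤ R := hr₁.1.trans hr₁.2
    exact add_nonneg (div_nonneg hR (by linarith)) (div_nonneg (by linarith) (by linarith))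
  have hdist : |(R - r₁) - (R - r₂)| = |r₁ - r₂| := by rw [sub_sub_sub_cancel_left, abs_sub_comm]
  have hscaled : |A * radialProfile R β (R - r₁) - A * radialProfile R β (R - r₂)|
      ≤ A * M * |r₁ - r₂| ^ (β + 1) := by
    rw [← mul_sub, abs_mul, abs_of_nonneg hA, mul_assoc, ← hdist]
    exact mul_le_mul_of_nonneg_left (abs_radialProfile_sub_le hβ1 hβ2 ht₁ ht₂) hA
  rw [hu, hu, add_comm γ, div_eq_mul_one_div (β + 1)]
  exact abs_rpow_sub_rpow_le_of_abs_sub_le (mul_nonneg hA (radialProfile_nonneg hβ1 ht₁))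
    (mul_nonneg hA (radialProfile_nonneg hβ1 ht₂)) (abs_nonneg _) (mul_nonneg hA hM)
    (by positivity) hq1 hscaled

theorem stmt5 (R c2 γ β : ℝ) (k : ℕ)
    (hR : 0 < R) (hc2 : 0 < c2) (hγ : 0 < γ) (hk : 1 ≤ k)
    (hβ1 : -1 < β) (hβ2 : β ≤ 0)
    (u : ℝ → ℝ)
    (hu : ∀ r, u r =
      (c2 * (1 + γ) / k *
        (R / (β + 1) * (R - r) ^ (β + 1) - 1 / (β + 2) * (R - r) ^ (β + 2))) ^ (1 / (1 + γ))) :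
    ∃ C : ℝ, ∀ r₁ ∈ Set.Icc (0 : ℝ) R, ∀ r₂ ∈ Set.Icc (0 : ℝ) R,
      |u r₁ - u r₂| ≤ C * |r₁ - r₂| ^ ((β + 1) / (γ + 1)) :=
  stmt5_general R c2 γ β k hc2 hγ hβ1 hβ2 u hu
end

section
/- With u_ε(r) = ((1+γ)/b·(r - k/b + ε + (k/b)·log((k-br)/(εb))))^{1/(1+γ)} as above, one has u_ε'(r) = -(r/(k-br))·u_ε(r)^{-γ} ≤ 0 and u_ε''(r) ≤ u_ε'(r)/r for all r∈(0, k/b - ε). -/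
/-!
Write `u = F ^ (1 / (1 + γ))` with `F = radialPower γ b ε k`. Then
`F' = -(1 + γ) r / (k - b r)`, and `F > 0` on the interval because `log x ≥ 1 - 1 / x`;
the chain rule gives `u' = h u ^ (-γ)` with `h r = -r / (k - b r)`. Differentiating once more,
`u'' = h' u ^ (-γ) - γ h² u ^ (-γ - 1) u ^ (-γ) ≤ -k / (k - b r)² u ^ (-γ)`, and this is at most
`-u ^ (-γ) / (k - b r) = u' / r` because `k ≥ k - b r`.
-/

open Real Set Filter Topology

lemma HasDerivAt.rpow_one_div_one_add {f : ℝ → ℝ} {g γ r : ℝ}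
    (hf : HasDerivAt f ((1 + γ) * g) r) (hpos : 0 < f r) (hγ : 1 + γ ≠ 0) :
    HasDerivAt (fun s => f s ^ (1 / (1 + γ))) (g * (f r ^ (1 / (1 + γ))) ^ (-γ)) r := by
  convert hf.rpow_const (p := 1 / (1 + γ)) (Or.inl hpos.ne') using 1
  rw [← rpow_mul hpos.le]
  have : 1 / (1 + γ) * -γ = 1 / (1 + γ) - 1 := by field_simp; ring
  rw [this]
  field_simp

/-- `u_ε ^ (1 + γ)`, the quantity under the root in the explicit radial solution. -/
noncomputable def radialPower (γ b ε k r : ℝ) : ℝ :=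
  (1 + γ) / b * (r - k / b + ε + k / b * log ((k - b * r) / (ε * b)))

section RadialPower

variable {γ b ε k r : ℝ}

lemma hasDerivAt_radialPower (hb : b ≠ 0) (hε : ε ≠ 0) (hr : k - b * r ≠ 0) :
    HasDerivAt (radialPower γ b ε k) ((1 + γ) * -(r / (k - b * r))) r := by
  have hlin : HasDerivAt (fun s => (k - b * s) / (ε * b)) (-b / (ε * b)) r := by
    simpa using (((hasDerivAt_id r).const_mul b).const_sub k).div_const (ε * b)
  have hlog := hlin.log (div_ne_zero hr (mul_ne_zero hε hb))
  refine (((((hasDerivAt_id r).sub_const (k / b)).add_const ε).add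
    (hlog.const_mul (k / b))).const_mul ((1 + γ) / b)).congr_deriv ?_
  field_simp
  ring

lemma radialPower_pos (hγ : 0 < 1 + γ) (hb : 0 < b) (hε : 0 < ε) (hr : 0 < r)
    (hkr : ε * b < k - b * r) : 0 < radialPower γ b ε k r := by
  have hεb : 0 < ε * b := by positivity
  have hd : 0 < k - b * r := hεb.trans hkr
  have hk : 0 < k := by nlinarith
  have hlog : 1 - ε * b / (k - b * r) ≤ log ((k - b * r) / (ε * b)) := by
    simpa using one_sub_inv_le_log_of_pos (div_pos hd hεb)
  have hbound : r * (k - b * r - ε * b) / (k - b * r) ≤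
      r - k / b + ε + k / b * log ((k - b * r) / (ε * b)) := by
    have e : r * (k - b * r - ε * b) / (k - b * r) =
        r - k / b + ε + k / b * (1 - ε * b / (k - b * r)) := by
      generalize hdef : k - b * r = d at hd ⊢
      obtain rfl : k = d + b * r := by linarith
      field_simp
      ring
    rw [e]
    gcongr
  have : 0 < r * (k - b * r - ε * b) / (k - b * r) :=
    div_pos (mul_pos hr (by linarith)) hd
  unfold radialPower
  exact mul_pos (by positivity) (this.trans_le hbound)

lemma hasDerivAt_radialPower_rpow (hγ : 0 < 1 + γ) (hb : 0 < b) (hε : 0 < ε) (hr : 0 < r)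
    (hkr : ε * b < k - b * r) :
    HasDerivAt (fun s => radialPower γ b ε k s ^ (1 / (1 + γ)))
      (-(r / (k - b * r)) * (radialPower γ b ε k r ^ (1 / (1 + γ))) ^ (-γ)) r :=
  (hasDerivAt_radialPower hb.ne' hε.ne' ((mul_pos hε hb).trans hkr).ne').rpow_one_div_one_add
    (radialPower_pos hγ hb hε hr hkr) hγ.ne'

end RadialPower

lemma mul_lt_sub_mul_of_lt_div_sub {b ε k r : ℝ} (hb : 0 < b) (hr : r < k / b - ε) :
    ε * b < k - b * r := by
  have := mul_lt_mul_of_pos_left hr hb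
  rw [mul_sub, mul_div_cancel₀ _ hb.ne'] at this
  linarith

lemma hasDerivAt_div_sub_mul {k b r : ℝ} (hr : k - b * r ≠ 0) :
    HasDerivAt (fun s => s / (k - b * s)) (k / (k - b * r) ^ 2) r := by
  have hlin : HasDerivAt (fun s => k - b * s) (-b) r := by
    simpa using ((hasDerivAt_id r).const_mul b).const_sub k
  refine ((hasDerivAt_id r).div hlin hr).congr_deriv ?_
  simp only [id]
  ring

lemma hasDerivAt_deriv_of_eq_mul_rpow {u h : ℝ → ℝ} {p h' r : ℝ}
    (hu : ∀ᶠ s in 𝓝 r, HasDerivAt u (h s * u s ^ p) s) (hh : HasDerivAt h h' r)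
    (hpos : 0 < u r) :
    HasDerivAt (deriv u) (h' * u r ^ p + h r * (h r * u r ^ p * p * u r ^ (p - 1))) r := by
  have heq : deriv u =ᶠ[𝓝 r] fun s => h s * u s ^ p :=
    hu.mono fun s hs => hs.deriv
  exact (hh.mul (hu.self_of_nhds.rpow_const (Or.inl hpos.ne'))).congr_of_eventuallyEq heq

theorem stmt9_general (γ b ε : ℝ) (k : ℕ) (hγ : 0 < γ) (hb : 0 < b)
    (hε : 0 < ε)
    (u : ℝ → ℝ)
    (hu : ∀ r, u r =
      ((1 + γ) / b * (r - k / b + ε + k / b * Real.log ((k - b * r) / (ε * b)))) ^ (1 / (1 + γ))) :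
    ∀ r ∈ Set.Ioo (0 : ℝ) (k / b - ε),
      (deriv u r = -(r / (k - b * r)) * (u r) ^ (-γ) ∧ deriv u r ≤ 0) ∧
        deriv (deriv u) r ≤ deriv u r / r := by
  have hγ' : 0 < 1 + γ := by linarith
  have hderiv : ∀ s ∈ Ioo (0 : ℝ) (k / b - ε),
      HasDerivAt u (-(s / (k - b * s)) * u s ^ (-γ)) s := fun s hs => by
    rw [show u = fun s => radialPower γ b ε k s ^ (1 / (1 + γ)) from funext hu]
    exact hasDerivAt_radialPower_rpow hγ' hb hε hs.1 (mul_lt_sub_mul_of_lt_div_sub hb hs.2)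
  intro r hr
  have hgap := mul_lt_sub_mul_of_lt_div_sub hb hr.2
  have hd : 0 < k - b * r := (mul_pos hε hb).trans hgap
  have hU : 0 < u r := by rw [hu]; exact rpow_pos_of_pos (radialPower_pos hγ' hb hε hr.1 hgap) _
  have hu' : deriv u r = -(r / (k - b * r)) * u r ^ (-γ) := (hderiv r hr).deriv
  have hu'' := hasDerivAt_deriv_of_eq_mul_rpow
    (eventually_of_mem (isOpen_Ioo.mem_nhds hr) hderiv) (hasDerivAt_div_sub_mul hd.ne').neg hU
  refine ⟨⟨hu', ?_⟩, ?_⟩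
  · rw [hu', neg_mul, neg_nonpos]
    exact mul_nonneg (div_nonneg hr.1.le hd.le) (rpow_nonneg hU.le _)
  · rw [hu''.deriv, hu']
    set d := (k : ℝ) - b * r
    set U := u r ^ (-γ)
    have hU' : 0 ≤ U := rpow_nonneg hU.le _
    have hcorr : 0 ≤ γ * (r / d) ^ 2 * U * u r ^ (-γ - 1) := by positivity
    have hkd : 1 / d ≤ k / d ^ 2 := by
      rw [div_le_div_iff₀ hd (by positivity)]
      nlinarith [mul_pos hb hr.1]
    calc _ = -(k / d ^ 2) * U - γ * (r / d) ^ 2 * U * u r ^ (-γ - 1) := by ring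
      _ ≤ -(1 / d) * U := by nlinarith [mul_le_mul_of_nonneg_right hkd hU']
      _ = -(r / d) * U / r := by field_simp [hr.1.ne']

theorem stmt9 (γ b ε : ℝ) (k : ℕ) (hγ : 0 < γ) (hb : 0 < b) (hk : 1 ≤ k)
    (hε : 0 < ε) (hεk : ε < k / b)
    (u : ℝ → ℝ)
    (hu : ∀ r, u r =
      ((1 + γ) / b * (r - k / b + ε + k / b * Real.log ((k - b * r) / (ε * b)))) ^ (1 / (1 + γ))) :
    ∀ r ∈ Set.Ioo (0 : ℝ) (k / b - ε),
      (deriv u r = -(r / (k - b * r)) * (u r) ^ (-γ) ∧ deriv u r ≤ 0) ∧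
        deriv (deriv u) r ≤ deriv u r / r :=
  stmt9_general γ b ε k hγ hb hε u hu
end
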